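/- arXiv:math/0205222 — 4 statements merged into one kernel-verified Lean document; each statement's English description precedes it below -/
import Mathlib

section
/- Let e, o : ℝ → ℝ be continuous 2π-periodic functions with e even (e(-t)=e(t)) and o odd (o(-t)=-o(t)), and suppose e(t)+o(t) > 0 for all t. If o is not identically zero, then there exists a continuous 2π-periodic function μ : ℝ → ℝ such that ∫₀^{2π} μ = 0, μ is even, and e(t)·μ(t) > -o(t)² for all t. -/
open Real intervalIntegral

/-- Lemma 4.3 (evenandodd): given continuous `2π`-periodic functions `e` (even) and
`o` (odd) with `e + o > 0` everywhere and `o` not identically zero, there is a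
continuous even `2π`-periodic function `μ` with zero mean such that
`e * μ > -o²` everywhere. -/
theorem exists_even_zero_mean_function
    (e o : ℝ → ℝ)
    (he_cont : Continuous e) (ho_cont : Continuous o)
    (he_per : Function.Periodic e (2 * π)) (ho_per : Function.Periodic o (2 * π))
    (he_even : ∀ t, e (-t) = e t) (ho_odd : ∀ t, o (-t) = -o t)
    (hpos : ∀ t, e t + o t > 0)
    (ho_ne : ∃ t, o t ≠ 0) :
    ∃ μ : ℝ → ℝ, Continuous μ ∧ Function.Periodic μ (2 * π) ∧
      (∫ t in (0:ℝ)..(2 * π), μ t) = 0 ∧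
      (∀ t, μ (-t) = μ t) ∧
      ∀ t, e t * μ t > -(o t) ^ 2 := by
  have hπ : (0:ℝ) < 2 * π := by positivity
  -- e is positive everywhere
  have he_pos : ∀ t, 0 < e t := by
    intro t
    have h1 := hpos t
    have h2 := hpos (-t)
    rw [he_even, ho_odd] at h2
    linarith
  set g : ℝ → ℝ := fun t => o t ^ 2 / e t with hg_def
  have hg_cont : Continuous g :=
    (ho_cont.pow 2).div he_cont (fun t => (he_pos t).ne')
  have hg_nonneg : ∀ t, 0 ≤ g t := fun t => div_nonneg (sq_nonneg _) (he_pos t).le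
  have hg_per : Function.Periodic g (2 * π) := by
    intro t; simp only [hg_def, he_per t, ho_per t]
  have hg_int : IntervalIntegrable g MeasureTheory.volume 0 (2 * π) :=
    hg_cont.intervalIntegrable _ _
  -- the integral of g is positive
  obtain ⟨t₀, ht₀⟩ := ho_ne
  have hgt₀ : 0 < g t₀ := div_pos (by positivity) (he_pos t₀)
  set x := toIcoMod hπ 0 t₀ with hx_def
  have hx_mem : x ∈ Set.Ico (0:ℝ) (2 * π) := toIcoMod_mem_Ico' hπ t₀
  have hgx : 0 < g x := by
    have : g x = g t₀ := by
      rw [hx_def, toIcoMod]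
      exact hg_per.sub_zsmul_eq _
    rw [this]; exact hgt₀
  have hI : 0 < ∫ t in (0:ℝ)..(2 * π), g t := by
    rw [integral_pos_iff_support_of_nonneg_ae
      (Filter.Eventually.of_forall hg_nonneg) hg_int]
    refine ⟨hπ, ?_⟩
    have hopen : IsOpen (g ⁻¹' Set.Ioi 0) := isOpen_Ioi.preimage hg_cont
    obtain ⟨δ, hδ, hball⟩ := Metric.isOpen_iff.mp hopen x hgx
    have hlt : x < min (x + δ) (2 * π) := lt_min (by linarith) hx_mem.2
    have hsub : Set.Ioo x (min (x + δ) (2 * π)) ⊆ Function.support g ∩ Set.Ioc 0 (2 * π) := by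
      intro y hy
      have hy1 : x < y := hy.1
      have hy2 : y < x + δ := hy.2.trans_le (min_le_left _ _)
      have hy3 : y ≤ 2 * π := (hy.2.trans_le (min_le_right _ _)).le
      constructor
      · have : y ∈ g ⁻¹' Set.Ioi 0 := by
          apply hball
          rw [Metric.mem_ball, Real.dist_eq, abs_lt]
          constructor <;> linarith
        exact Function.mem_support.mpr (ne_of_gt this)
      · exact ⟨lt_of_le_of_lt hx_mem.1 hy1, hy3⟩
    calc (0:ENNReal) < MeasureTheory.volume (Set.Ioo x (min (x + δ) (2 * π))) := by
          rw [Real.volume_Ioo]; simp [hlt]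
      _ ≤ _ := MeasureTheory.measure_mono hsub
  set I := ∫ t in (0:ℝ)..(2 * π), g t with hI_def
  refine ⟨fun t => I / (2 * π) - g t, ?_, ?_, ?_, ?_, ?_⟩
  · exact continuous_const.sub hg_cont
  · intro t; simp [hg_per t]
  · rw [intervalIntegral.integral_sub (intervalIntegrable_const) hg_int]
    simp only [intervalIntegral.integral_const, smul_eq_mul, sub_zero]
    rw [← hI_def]
    field_simp
    ring
  · intro t
    simp only [hg_def]
    rw [he_even, ho_odd]
    ring_nf
  · intro t
    have het := he_pos t
    have key : e t * (I / (2 * π) - g t) = e t * I / (2 * π) - o t ^ 2 := by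
      simp only [hg_def]
      field_simp
    rw [key]
    have : 0 < e t * I / (2 * π) := by positivity
    linarith
end

section
/- Let c : ℝ → ℝ² be an L-periodic C¹ unit-speed curve with c(t + L/2) = -c(t) for all t, and define γ̃ : ℝ → ℝ³ by γ̃(t) = (c(t), z(t)) where z : ℝ → ℝ is C¹ and nL-periodic for some positive integer n. Then there exist s ≠ t with s ≢ t (mod nL) such that γ̃'(s) and γ̃'(t) are linearly dependent (parallel). In particular γ̃ is not a skew loop. -/
open Real

/-- The cross product in `ℝ³`. -/
noncomputable def cross3 (u v : EuclideanSpace ℝ (Fin 3)) : EuclideanSpace ℝ (Fin 3) :=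
  (WithLp.equiv 2 (Fin 3 → ℝ)).symm
    ![u 1 * v 2 - u 2 * v 1, u 2 * v 0 - u 0 * v 2, u 0 * v 1 - u 1 * v 0]

/-- Proposition A.2: a graph `γ̃(t) = (c(t), z(t))` over a cylinder whose base `c`
is an `L`-periodic `C¹` unit-speed curve with arclength symmetry `c(t+L/2) = -c(t)`
(with `z` `C¹` and `nL`-periodic) has a pair of parallel tangent lines; in
particular `γ̃` is not a skew loop. -/
theorem cylinder_graph_not_skew
    (L : ℝ) (hL : 0 < L)
    (c : ℝ → EuclideanSpace ℝ (Fin 2))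
    (hc_smooth : ContDiff ℝ 1 c)
    (hc_per : Function.Periodic c L)
    (hc_unit : ∀ t, ‖deriv c t‖ = 1)
    (hc_sym : ∀ t, c (t + L / 2) = -c t)
    (z : ℝ → ℝ) (hz_smooth : ContDiff ℝ 1 z)
    (n : ℕ) (hn : 0 < n)
    (hz_per : Function.Periodic z (n * L))
    (γ : ℝ → EuclideanSpace ℝ (Fin 3))
    (hγ : ∀ t, γ t = (WithLp.equiv 2 (Fin 3 → ℝ)).symm ![c t 0, c t 1, z t]) :
    ∃ s t : ℝ, s ≠ t ∧ (¬ ∃ m : ℤ, s - t = m * (n * L)) ∧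
      cross3 (deriv γ s) (deriv γ t) = 0 := by
  have hc_diff : Differentiable ℝ c := hc_smooth.differentiable one_ne_zero
  have hz_diff : Differentiable ℝ z := hz_smooth.differentiable one_ne_zero
  have hz'cont : Continuous (deriv z) := hz_smooth.continuous_deriv le_rfl
  have hnL : (0:ℝ) < n * L := mul_pos (by exact_mod_cast hn) hL
  -- the derivative of the symmetry
  have hc_sym' : ∀ t, deriv c (t + L / 2) = - deriv c t := by
    intro t
    have h1 : HasDerivAt (fun s => c (s + L/2)) (deriv c (t + L/2)) t := by
      have := (hc_diff (t + L/2)).hasDerivAt.scomp t ((hasDerivAt_id t).add_const (L/2))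
      rw [one_smul] at this; exact this
    have h2 : HasDerivAt (fun s => -c s) (deriv c (t + L/2)) t := by
      have heq : (fun s => c (s + L/2)) = fun s => -c s := funext fun s => hc_sym s
      rwa [heq] at h1
    exact h2.unique (hc_diff t).hasDerivAt.neg
  -- the derivative of γ
  have hγ' : ∀ t, deriv γ t
      = (WithLp.equiv 2 (Fin 3 → ℝ)).symm ![deriv c t 0, deriv c t 1, deriv z t] := by
    intro t
    have hci : ∀ (i : Fin 2), HasDerivAt (fun s => c s i) (deriv c t i) t := by
      intro i
      have := (EuclideanSpace.proj (𝕜 := ℝ) i).hasFDerivAt.comp_hasDerivAt t (hc_diff t).hasDerivAt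
      exact this
    have hpi : HasDerivAt (fun s => (![c s 0, c s 1, z s] : Fin 3 → ℝ))
        ![deriv c t 0, deriv c t 1, deriv z t] t := by
      rw [hasDerivAt_pi]
      intro i
      fin_cases i
      · simpa using hci 0
      · simpa using hci 1
      · simpa using (hz_diff t).hasDerivAt
    have h2 : HasDerivAt γ
        ((WithLp.equiv 2 (Fin 3 → ℝ)).symm ![deriv c t 0, deriv c t 1, deriv z t]) t := by
      have := ((PiLp.continuousLinearEquiv 2 ℝ
        (fun _ : Fin 3 => ℝ)).symm.toContinuousLinearMap).hasFDerivAt.comp_hasDerivAt t hpi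
      have hfun : (fun s => (PiLp.continuousLinearEquiv 2 ℝ
          (fun _ : Fin 3 => ℝ)).symm.toContinuousLinearMap (![c s 0, c s 1, z s] : Fin 3 → ℝ))
          = γ := by
        funext s; rw [hγ s]; rfl
      rw [← hfun]
      exact this
    exact h2.deriv
  -- find t₀ with deriv z t₀ + deriv z (t₀ + L/2) = 0
  set g : ℝ → ℝ := fun t => deriv z t + deriv z (t + L/2) with hgdef
  have hgcont : Continuous g :=
    hz'cont.add (hz'cont.comp (continuous_id.add continuous_const))
  have hint1 : ∫ t in (0:ℝ)..(n*L), deriv z t = 0 := by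
    rw [intervalIntegral.integral_deriv_eq_sub (fun x _ => hz_diff x)
      (hz'cont.intervalIntegrable _ _)]
    have := hz_per 0
    simp only [zero_add] at this
    rw [this]; ring
  have hint2 : ∫ t in (0:ℝ)..(n*L), deriv z (t + L/2) = 0 := by
    rw [intervalIntegral.integral_comp_add_right (fun t => deriv z t) (L/2)]
    rw [intervalIntegral.integral_deriv_eq_sub (fun x _ => hz_diff x)
      (hz'cont.intervalIntegrable _ _)]
    have := hz_per (L/2)
    rw [zero_add, add_comm, this]; ring
  have hgint : ∫ t in (0:ℝ)..(n*L), g t = 0 := by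
    have hadd : ∫ t in (0:ℝ)..(n*L), g t
        = (∫ t in (0:ℝ)..(n*L), deriv z t) + ∫ t in (0:ℝ)..(n*L), deriv z (t + L/2) :=
      intervalIntegral.integral_add (hz'cont.intervalIntegrable _ _)
        ((hz'cont.comp (continuous_id.add continuous_const)).intervalIntegrable _ _)
    rw [hadd, hint1, hint2]; ring
  obtain ⟨t₀, ht₀⟩ : ∃ t₀, g t₀ = 0 := by
    by_contra h
    push_neg at h
    have hsign : (∀ t, 0 < g t) ∨ (∀ t, g t < 0) := by
      rcases (h 0).lt_or_gt with h0 | h0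
      · right
        intro t
        by_contra hge
        push_neg at hge
        have : (0:ℝ) ∈ Set.uIcc (g 0) (g t) := by
          rw [Set.mem_uIcc]
          left; exact ⟨h0.le, hge⟩
        obtain ⟨x, _, hx⟩ := intermediate_value_uIcc (hgcont.continuousOn) this
        exact h x hx
      · left
        intro t
        by_contra hge
        push_neg at hge
        have : (0:ℝ) ∈ Set.uIcc (g 0) (g t) := by
          rw [Set.mem_uIcc]
          right; exact ⟨hge, h0.le⟩
        obtain ⟨x, _, hx⟩ := intermediate_value_uIcc (hgcont.continuousOn) this
        exact h x hx
    rcases hsign with hpos | hneg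
    · have := intervalIntegral.intervalIntegral_pos_of_pos
        (hgcont.intervalIntegrable 0 (n*L)) hpos hnL
      rw [hgint] at this; exact lt_irrefl _ this
    · have := intervalIntegral.intervalIntegral_pos_of_pos
        ((hgcont.neg).intervalIntegrable 0 (n*L)) (fun t => neg_pos.2 (hneg t)) hnL
      simp only [Pi.neg_apply] at this
      rw [intervalIntegral.integral_neg, hgint, neg_zero] at this
      exact lt_irrefl _ this
  -- now exhibit the pair
  refine ⟨t₀, t₀ + L/2, ?_, ?_, ?_⟩
  · intro hEq
    linarith
  · rintro ⟨m, hm⟩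
    have hm' : t₀ - (t₀ + L/2) = -(L/2) := by ring
    rw [hm'] at hm
    have hk : ((2 * m * n : ℤ) : ℝ) = -1 := by
      push_cast
      have hL' : (L:ℝ) ≠ 0 := ne_of_gt hL
      field_simp at hm
      nlinarith [hm]
    have hdvd : (2:ℤ) ∣ -1 := by
      have : (2 * m * n : ℤ) = -1 := by exact_mod_cast hk
      exact this ▸ ⟨m * n, by ring⟩
    norm_num at hdvd
  · have hu := hγ' t₀
    have hv := hγ' (t₀ + L/2)
    rw [hc_sym' t₀] at hv
    rw [hu, hv]
    have hq : deriv z (t₀ + L/2) = - deriv z t₀ := by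
      have := ht₀; rw [hgdef] at this; simp only at this; linarith
    rw [hq]
    apply (WithLp.equiv 2 (Fin 3 → ℝ)).injective
    simp only [cross3, Equiv.apply_symm_apply]
    funext i
    fin_cases i <;>
      simp <;> ring
end

section
/- Let Γ be a strictly convex C² oval in ℝ² with support parametrization γ(t) (so γ'(t) = v(t)·i·e^{it} with v(t) = ‖γ'(t)‖ > 0), let z : ℝ → ℝ be C¹ and 2π-periodic, and set γ̃(t) = (γ(t), z(t)) ∈ ℝ³. Then γ̃ is a skew loop if and only if v(t) z'(t+π) + v(t+π) z'(t) ≠ 0 for all t, equivalently v₊(t) z'₊(t) - v₋(t) z'₋(t) ≠ 0 for all t, where f₊(t) = (f(t)+f(t+π))/2 and f₋(t) = (f(t)-f(t+π))/2. -/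
open Real Complex

/-- Lemma 4.4 (skewness criterion): let `γ` be the support parametrization of a
strictly convex `C²` oval (so `γ'(t) = v(t)·i·e^{it}` with `v(t) = ‖γ'(t)‖ > 0`),
let `z` be `C¹` and `2π`-periodic, and let `gt(t) = (γ(t), z(t)) ∈ ℝ³`.  Then
`gt` is skew iff `v(t)z'(t+π) + v(t+π)z'(t) ≠ 0` for all `t`, equivalently iff
`v₊ z'₊ - v₋ z'₋ ≠ 0` everywhere, where `f₊`, `f₋` are the even and odd parts
of `f` under `t ↦ t + π`. -/
theorem graph_skew_iff_criterion
    (γ : ℝ → ℂ) (v : ℝ → ℝ)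
    (hγ_smooth : ContDiff ℝ 1 γ)
    (hγ_per : Function.Periodic γ (2 * π))
    (hv : ∀ t, v t = ‖deriv γ t‖)
    (hv_pos : ∀ t, v t > 0)
    (hγ_normal : ∀ t, deriv γ t =
      (v t : ℂ) * (Complex.I * Complex.exp (t * Complex.I)))
    (z : ℝ → ℝ) (hz_smooth : ContDiff ℝ 1 z)
    (hz_per : Function.Periodic z (2 * π))
    (gt : ℝ → EuclideanSpace ℝ (Fin 3))
    (hgt : ∀ t, gt t = (WithLp.equiv 2 (Fin 3 → ℝ)).symm ![(γ t).re, (γ t).im, z t]) :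
    ((∀ s t : ℝ, (¬ ∃ m : ℤ, s - t = m * (2 * π)) →
        cross3 (deriv gt s) (deriv gt t) ≠ 0) ↔
      (∀ t, v t * deriv z (t + π) + v (t + π) * deriv z t ≠ 0)) ∧
    ((∀ t, v t * deriv z (t + π) + v (t + π) * deriv z t ≠ 0) ↔
      (∀ t, (v t + v (t + π)) / 2 * ((deriv z t + deriv z (t + π)) / 2)
          - (v t - v (t + π)) / 2 * ((deriv z t - deriv z (t + π)) / 2) ≠ 0)) := by
  have hγd : Differentiable ℝ γ := hγ_smooth.differentiable one_ne_zero
  have hzd : Differentiable ℝ z := hz_smooth.differentiable one_ne_zero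
  -- derivatives of the components
  have hre : ∀ t, HasDerivAt (fun t => (γ t).re) (-(v t * Real.sin t)) t := by
    intro t
    have h := Complex.reCLM.hasFDerivAt.comp_hasDerivAt t (hγd t).hasDerivAt
    refine h.congr_deriv ?_
    rw [hγ_normal]
    simp [Complex.mul_re, Complex.exp_ofReal_mul_I_re, Complex.exp_ofReal_mul_I_im]
  have him : ∀ t, HasDerivAt (fun t => (γ t).im) (v t * Real.cos t) t := by
    intro t
    have h := Complex.imCLM.hasFDerivAt.comp_hasDerivAt t (hγd t).hasDerivAt
    refine h.congr_deriv ?_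
    rw [hγ_normal]
    simp [Complex.mul_im, Complex.exp_ofReal_mul_I_re, Complex.exp_ofReal_mul_I_im]
  -- derivative of gt
  have hderiv : ∀ t, deriv gt t =
      (WithLp.equiv 2 (Fin 3 → ℝ)).symm ![-(v t * Real.sin t), v t * Real.cos t, deriv z t] := by
    intro t
    have hf : HasDerivAt (fun t => (![(γ t).re, (γ t).im, z t] : Fin 3 → ℝ))
        (![-(v t * Real.sin t), v t * Real.cos t, deriv z t]) t := by
      apply hasDerivAt_pi.2
      intro i
      fin_cases i
      · simpa using hre t
      · simpa using him t
      · simpa using (hzd t).hasDerivAt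
    have L := (EuclideanSpace.equiv (Fin 3) ℝ).symm
    have hg : HasDerivAt gt
        ((WithLp.equiv 2 (Fin 3 → ℝ)).symm ![-(v t * Real.sin t), v t * Real.cos t, deriv z t]) t := by
      have := ((EuclideanSpace.equiv (Fin 3) ℝ).symm.toContinuousLinearMap.hasFDerivAt).comp_hasDerivAt t hf
      have hfun : gt = (fun u => (EuclideanSpace.equiv (Fin 3) ℝ).symm.toContinuousLinearMap ![(γ u).re, (γ u).im, z u]) := by
        funext u
        rw [hgt]
        rfl
      rw [hfun]
      exact this
    exact hg.deriv
  -- periodicity of v and deriv z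
  have hdγ_per : Function.Periodic (deriv γ) (2 * π) := by
    intro x
    have : deriv (fun y => γ (y + 2 * π)) x = deriv γ (x + 2 * π) := deriv_comp_add_const γ _ x
    rw [← this]
    congr 1
    funext y
    exact hγ_per y
  have hv_per : Function.Periodic v (2 * π) := by
    intro t; rw [hv, hv, hdγ_per]
  have hdz_per : Function.Periodic (deriv z) (2 * π) := by
    intro x
    have : deriv (fun y => z (y + 2 * π)) x = deriv z (x + 2 * π) := deriv_comp_add_const z _ x
    rw [← this]
    congr 1
    funext y
    exact hz_per y
  -- the cross product formula
  have hcross : ∀ s t : ℝ, cross3 (deriv gt s) (deriv gt t) =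
      (WithLp.equiv 2 (Fin 3 → ℝ)).symm
        ![v s * Real.cos s * deriv z t - deriv z s * (v t * Real.cos t),
          deriv z s * (-(v t * Real.sin t)) - (-(v s * Real.sin s)) * deriv z t,
          v s * v t * Real.sin (t - s)] := by
    intro s t
    rw [hderiv, hderiv]
    unfold cross3
    congr 1
    funext i
    fin_cases i <;> simp [Real.sin_sub] <;> ring_nf
  set E : ℝ → ℝ := fun t => v t * deriv z (t + π) + v (t + π) * deriv z t with hE
  constructor
  · constructor
    · -- skew → criterion
      intro hsk t
      have h := hsk (t + π) t (by
        rintro ⟨m, hm⟩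
        have : (t + π) - t = π := by ring
        rw [this] at hm
        have hπ : (0:ℝ) < π := Real.pi_pos
        rcases lt_trichotomy (m:ℝ) 0 with h1 | h1 | h1
        · nlinarith
        · rw [h1] at hm; nlinarith
        · have : (1:ℝ) ≤ (m:ℝ) := by exact_mod_cast (by exact_mod_cast h1 : (0:ℤ) < m)
          nlinarith)
      intro hc
      apply h
      rw [hcross]
      have e0 : gt = gt := rfl
      have hc0 : v (t+π) * Real.cos (t+π) * deriv z t - deriv z (t+π) * (v t * Real.cos t) = 0 := by
        rw [Real.cos_add_pi]; linear_combination (-Real.cos t) * hc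
      have hc1 : deriv z (t+π) * (-(v t * Real.sin t)) - (-(v (t+π) * Real.sin (t+π))) * deriv z t = 0 := by
        rw [Real.sin_add_pi]; linear_combination (-Real.sin t) * hc
      have hc2 : v (t+π) * v t * Real.sin (t - (t+π)) = 0 := by
        have : t - (t+π) = -π := by ring
        rw [this]; simp
      rw [hc0, hc1, hc2]
      ext i
      fin_cases i <;> rfl
    · -- criterion → skew
      intro hcr s t hst
      rw [hcross]
      by_cases hsin : Real.sin (t - s) = 0
      · -- t - s is an odd multiple of π
        obtain ⟨n, hn⟩ := Real.sin_eq_zero_iff.mp hsin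
        have hodd : ¬ ∃ k : ℤ, n = 2 * k := by
          rintro ⟨k, rfl⟩
          apply hst
          refine ⟨-k, ?_⟩
          push_cast at hn ⊢
          linarith
        obtain ⟨k, hk⟩ : ∃ k : ℤ, n = 2 * k + 1 := by
          rcases Int.even_or_odd n with ⟨k, hk⟩ | ⟨k, hk⟩
          · exact absurd ⟨k, by omega⟩ hodd
          · exact ⟨k, hk⟩
        have ht : t = (s + π) + k * (2 * π) := by
          rw [hk] at hn; push_cast at hn; linarith
        have hvt : v t = v (s + π) := by rw [ht]; exact (hv_per.int_mul k) (s + π)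
        have hzt : deriv z t = deriv z (s + π) := by rw [ht]; exact (hdz_per.int_mul k) (s + π)
        have hct : Real.cos t = -Real.cos s := by
          rw [ht, Real.cos_add_int_mul_two_pi, Real.cos_add_pi]
        have hst' : Real.sin t = -Real.sin s := by
          rw [ht, Real.sin_add_int_mul_two_pi, Real.sin_add_pi]
        have hE : E s ≠ 0 := hcr s
        intro h0
        apply hE
        have h0' : Real.cos s * E s = 0 ∧ Real.sin s * E s = 0 := by
          constructor
          · have := congrFun (congrArg (WithLp.equiv 2 (Fin 3 → ℝ)) h0) 0
            show Real.cos s * (v s * deriv z (s + π) + v (s + π) * deriv z s) = 0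
            simp [hvt, hzt, hct, hst'] at this
            linear_combination this
          · have := congrFun (congrArg (WithLp.equiv 2 (Fin 3 → ℝ)) h0) 1
            show Real.sin s * (v s * deriv z (s + π) + v (s + π) * deriv z s) = 0
            simp [hvt, hzt, hct, hst'] at this
            linear_combination this
        rcases mul_eq_zero.mp h0'.1 with h | h
        · rcases mul_eq_zero.mp h0'.2 with h' | h'
          · exact absurd (by nlinarith [Real.sin_sq_add_cos_sq s] : (1:ℝ) = 0) one_ne_zero
          · exact h'
        · exact h
      · -- third component nonzero
        intro h0
        have := congrFun (congrArg (WithLp.equiv 2 (Fin 3 → ℝ)) h0) 2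
        simp at this
        rcases this with h | h
        · rcases h with h | h
          · exact absurd h (hv_pos s).ne'
          · exact absurd h (hv_pos t).ne'
        · exact hsin h
  · constructor
    · intro h t
      have := h t
      intro hc
      apply this
      linear_combination 2 * hc
    · intro h t
      have := h t
      intro hc
      apply this
      linear_combination hc / 2
end

section
/- The curve γ̃(t) = (cos t, sin 2t, t/π - (t/π)^{15}) for t ∈ [-π, π] (closed up as a loop since γ̃(-π) = γ̃(π) and γ̃'(-π) = γ̃'(π)) is a skew loop lying on the cylinder over the centrally symmetric figure-eight c(t) = (cos t, sin 2t); i.e., γ̃'(t) × γ̃'(s) ≠ 0 for all distinct t, s ∈ ℝ/2πℤ. -/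
open Real

noncomputable def q14 (x : ℝ) : ℝ := (1 - 15 * (x / π) ^ 14) / π

noncomputable def fcur (x : ℝ) : EuclideanSpace ℝ (Fin 3) :=
  (WithLp.equiv 2 (Fin 3 → ℝ)).symm ![Real.cos x, Real.sin (2 * x), x / π - (x / π) ^ 15]

noncomputable def uvec (x : ℝ) : EuclideanSpace ℝ (Fin 3) :=
  (WithLp.equiv 2 (Fin 3 → ℝ)).symm ![-Real.sin x, 2 * Real.cos (2 * x), q14 x]

lemma hasDerivAt_fcur (t : ℝ) : HasDerivAt fcur (uvec t) t := by
  have h : HasDerivAt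
      (fun x => ![Real.cos x, Real.sin (2 * x), x / π - (x / π) ^ 15] : ℝ → (Fin 3 → ℝ))
      ![-Real.sin t, 2 * Real.cos (2 * t), q14 t] t := by
    rw [hasDerivAt_pi]
    intro i
    fin_cases i
    · simpa using Real.hasDerivAt_cos t
    · have hlin : HasDerivAt (fun x : ℝ => 2 * x) (2 : ℝ) t := by
        simpa using (hasDerivAt_id t).const_mul (2 : ℝ)
      have h2 := (Real.hasDerivAt_sin (2 * t)).comp t hlin
      have h2' : HasDerivAt (fun x : ℝ => Real.sin (2 * x)) (Real.cos (2 * t) * 2) t := h2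
      simpa [mul_comm] using h2'
    · have h1 : HasDerivAt (fun x : ℝ => x / π) (1 / π) t := (hasDerivAt_id t).div_const π
      have h3 := h1.sub (h1.pow 15)
      have he : (1 : ℝ) / π - (15 : ℕ) * (t / π) ^ (15 - 1) * (1 / π) = q14 t := by
        unfold q14; push_cast; ring
      rw [he] at h3
      have h4 : HasDerivAt (fun x : ℝ => x / π - (x / π) ^ 15) (q14 t) t := h3
      simpa using h4
  have := ((PiLp.continuousLinearEquiv 2 ℝ (fun _ : Fin 3 => ℝ)).symm :
      (Fin 3 → ℝ) →L[ℝ] EuclideanSpace ℝ (Fin 3)).hasFDerivAt.comp_hasDerivAt t h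
  exact this

lemma deriv_gamma (γ : ℝ → EuclideanSpace ℝ (Fin 3))
    (hγ_def : ∀ t ∈ Set.Icc (-π) π, γ t = (WithLp.equiv 2 (Fin 3 → ℝ)).symm
      ![Real.cos t, Real.sin (2 * t), t / π - (t / π) ^ 15])
    (hγ_diff : Differentiable ℝ γ) :
    ∀ x ∈ Set.Ico (-π) π, deriv γ x = uvec x := by
  intro x hx
  rcases eq_or_lt_of_le hx.1 with h | h
  · subst h
    have hmem : Set.Icc (-π) π ∈ nhdsWithin (-π : ℝ) (Set.Ici (-π)) :=
      Icc_mem_nhdsGE (by linarith [pi_pos])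
    have hev : γ =ᶠ[nhdsWithin (-π : ℝ) (Set.Ici (-π))] fcur :=
      Filter.eventually_of_mem hmem (fun y hy => hγ_def y hy)
    have h1 : HasDerivWithinAt γ (uvec (-π)) (Set.Ici (-π)) (-π) :=
      ((hasDerivAt_fcur (-π)).hasDerivWithinAt).congr_of_eventuallyEq hev
        (hγ_def (-π) ⟨le_refl _, by linarith [pi_pos]⟩)
    have h2 : HasDerivWithinAt γ (deriv γ (-π)) (Set.Ici (-π)) (-π) :=
      ((hγ_diff (-π)).hasDerivAt).hasDerivWithinAt
    have hu : UniqueDiffWithinAt ℝ (Set.Ici (-π : ℝ)) (-π) :=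
      uniqueDiffOn_Ici _ _ Set.self_mem_Ici
    rw [← h2.derivWithin hu, h1.derivWithin hu]
  · have hmem : Set.Icc (-π) π ∈ nhds x := Icc_mem_nhds h hx.2
    have hev : γ =ᶠ[nhds x] fcur :=
      Filter.eventually_of_mem hmem (fun y hy => hγ_def y hy)
    rw [hev.deriv_eq, (hasDerivAt_fcur x).deriv]

lemma q14_neg (x : ℝ) : q14 (-x) = q14 x := by
  unfold q14
  rw [neg_div, (by decide : Even 14).neg_pow]

lemma q14_anti {x y : ℝ} (h : |x| ≤ |y|) : q14 y ≤ q14 x := by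
  unfold q14
  have h14 : (x / π) ^ 14 ≤ (y / π) ^ 14 := by
    have h1 : |x / π| ^ 14 ≤ |y / π| ^ 14 := by
      apply pow_le_pow_left₀ (abs_nonneg _)
      rw [abs_div, abs_div, abs_of_pos pi_pos]
      exact div_le_div_of_nonneg_right h pi_pos.le
    calc (x / π) ^ 14 = |x / π| ^ 14 := by
          rw [← abs_pow, abs_of_nonneg (by positivity)]
      _ ≤ |y / π| ^ 14 := h1
      _ = (y / π) ^ 14 := by rw [← abs_pow, abs_of_nonneg (by positivity)]
  have : 1 - 15 * (y / π) ^ 14 ≤ 1 - 15 * (x / π) ^ 14 := by linarith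
  exact div_le_div_of_nonneg_right this pi_pos.le

lemma q14_34 : q14 (3 * π / 4) = (1 - 15 * (3 / 4 : ℝ) ^ 14) / π := by
  unfold q14
  rw [show (3 * π / 4) / π = 3 / 4 by field_simp]

lemma q14_56 : q14 (5 * π / 6) = (1 - 15 * (5 / 6 : ℝ) ^ 14) / π := by
  unfold q14
  rw [show (5 * π / 6) / π = 5 / 6 by field_simp]

lemma q14_34_pos : 0 < q14 (3 * π / 4) := by
  rw [q14_34]
  apply div_pos (by norm_num) pi_pos

lemma q14_eq_imp {x y : ℝ} (h : q14 x = q14 y) : |x| = |y| := by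
  unfold q14 at h
  have hπ : (π : ℝ) ≠ 0 := pi_ne_zero
  have h14 : x ^ 14 = y ^ 14 := by
    field_simp at h
    nlinarith [h]
  have habs : |x| ^ 14 = |y| ^ 14 := by
    rw [← abs_pow, ← abs_pow, h14]
  rcases lt_trichotomy |x| |y| with hlt | he | hgt
  · exact absurd habs (ne_of_lt (pow_lt_pow_left₀ hlt (abs_nonneg _) (by norm_num)))
  · exact he
  · exact absurd habs.symm (ne_of_lt (pow_lt_pow_left₀ hgt (abs_nonneg _) (by norm_num)))

set_option maxHeartbeats 1000000 in
lemma caseB_main (s t : ℝ) (hs1 : 3 * π / 4 < s) (hs2 : s ≤ π)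
    (ht1 : -π ≤ t) (ht2 : t ≤ π)
    (ha : 0 < Real.sin s) (hprod : Real.sin s * Real.sin t = -(1/2))
    (heq : Real.sin s * q14 t = Real.sin t * q14 s) : False := by
  set a := Real.sin s with ha_def
  set b := -Real.sin t with hb_def
  have hb : 0 < b := by nlinarith
  have hab : a * b = 1/2 := by nlinarith
  have ha1 : a ≤ 1 := sin_le_one s
  have hb1 : b ≤ 1 := by
    have := neg_one_le_sin t; simp only [hb_def]; linarith
  have ha2 : 1/2 ≤ a := by nlinarith
  have hb2 : 1/2 ≤ b := by nlinarith
  have htneg : t < 0 := by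
    by_contra hc
    push_neg at hc
    have : 0 ≤ Real.sin t := Real.sin_nonneg_of_nonneg_of_le_pi hc ht2
    nlinarith
  have hs56 : s ≤ 5 * π / 6 := by
    by_contra hc
    push_neg at hc
    have hlt : Real.sin (π - s) < Real.sin (π / 6) := by
      apply Real.sin_lt_sin_of_lt_of_le_pi_div_two
      · linarith [pi_pos]
      · linarith [pi_pos]
      · linarith
    rw [Real.sin_pi_sub, Real.sin_pi_div_six] at hlt
    linarith
  have haclt : a < Real.sqrt 2 / 2 := by
    have hlt : Real.sin (π - s) < Real.sin (π / 4) := by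
      apply Real.sin_lt_sin_of_lt_of_le_pi_div_two
      · linarith [pi_pos]
      · linarith [pi_pos]
      · linarith
    rw [Real.sin_pi_sub, Real.sin_pi_div_four] at hlt
    exact hlt
  have hr2 : (Real.sqrt 2 / 2) ^ 2 = 1/2 := by
    rw [div_pow, Real.sq_sqrt (by norm_num : (0:ℝ) ≤ 2)]; norm_num
  have hrpos : 0 < Real.sqrt 2 / 2 := by positivity
  have hbgt : Real.sqrt 2 / 2 < b := by nlinarith
  have ht34 : -t ≤ 3 * π / 4 := by
    by_contra hc
    push_neg at hc
    have hlt : Real.sin (π - (-t)) < Real.sin (π / 4) := by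
      apply Real.sin_lt_sin_of_lt_of_le_pi_div_two
      · linarith [pi_pos]
      · linarith [pi_pos]
      · linarith
    rw [Real.sin_pi_sub, Real.sin_pi_div_four, Real.sin_neg] at hlt
    linarith
  have hqt : q14 (3 * π / 4) ≤ q14 t := by
    apply q14_anti
    rw [abs_of_neg htneg, abs_of_pos (by linarith [pi_pos] : (0:ℝ) < 3 * π / 4)]
    linarith
  have hqs : q14 (5 * π / 6) ≤ q14 s := by
    apply q14_anti
    rw [abs_of_pos (by linarith [pi_pos] : (0:ℝ) < s),
      abs_of_pos (by linarith [pi_pos] : (0:ℝ) < 5 * π / 6)]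
    linarith
  have key1 : (1/2) * q14 (3 * π / 4) ≤ a * q14 t :=
    mul_le_mul ha2 hqt q14_34_pos.le (by linarith)
  have h56neg : q14 (5 * π / 6) < 0 := by
    rw [q14_56]
    apply div_neg_of_neg_of_pos (by norm_num) pi_pos
  have key2 : q14 (5 * π / 6) ≤ b * q14 s := by
    rcases le_or_gt 0 (q14 s) with h | h
    · nlinarith
    · nlinarith
  have hsum : 0 < (1/2) * q14 (3 * π / 4) + q14 (5 * π / 6) := by
    rw [q14_34, q14_56]
    have : (1/2) * ((1 - 15 * (3 / 4 : ℝ) ^ 14) / π) + (1 - 15 * (5 / 6 : ℝ) ^ 14) / π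
        = ((1 - 15 * (3 / 4 : ℝ) ^ 14) / 2 + (1 - 15 * (5 / 6 : ℝ) ^ 14)) / π := by
      ring
    rw [this]
    apply div_pos (by norm_num) pi_pos
  have heq' : a * q14 t + b * q14 s = 0 := by
    simp only [hb_def] at heq ⊢; linarith
  linarith

lemma sin_pos_of_mem (s : ℝ) (hs1 : -π ≤ s) (hs2 : s ≤ π) (h : 0 < Real.sin s) : 0 < s := by
  by_contra hc
  push_neg at hc
  have : 0 ≤ Real.sin (-s) := Real.sin_nonneg_of_nonneg_of_le_pi (by linarith) (by linarith)
  rw [Real.sin_neg] at this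
  linarith

lemma caseB (s t : ℝ) (hs1 : -π ≤ s) (hs2 : s ≤ π) (ht1 : -π ≤ t) (ht2 : t ≤ π)
    (ha : 0 < Real.sin s) (hprod : Real.sin s * Real.sin t = -(1/2))
    (heq : Real.sin s * q14 t = Real.sin t * q14 s) : False := by
  have hb : Real.sin t < 0 := by nlinarith
  have hspos : 0 < s := sin_pos_of_mem s hs1 hs2 ha
  have htneg : t < 0 := by
    have := sin_pos_of_mem (-t) (by linarith) (by linarith)
      (by rw [Real.sin_neg]; linarith)
    linarith
  by_cases h34 : s ≤ 3 * π / 4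
  · by_cases h34t : -t ≤ 3 * π / 4
    · -- both in the good region: q14 positive at both
      have hqs : q14 (3 * π / 4) ≤ q14 s := by
        apply q14_anti
        rw [abs_of_pos hspos, abs_of_pos (by linarith [pi_pos] : (0:ℝ) < 3 * π / 4)]
        linarith
      have hqt : q14 (3 * π / 4) ≤ q14 t := by
        apply q14_anti
        rw [abs_of_neg htneg, abs_of_pos (by linarith [pi_pos] : (0:ℝ) < 3 * π / 4)]
        linarith
      nlinarith [q14_34_pos, mul_pos ha (lt_of_lt_of_le q14_34_pos hqt),
        mul_pos (neg_pos.2 hb) (lt_of_lt_of_le q14_34_pos hqs)]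
    · -- -t is large: apply the main case to (-t, -s)
      push_neg at h34t
      apply caseB_main (-t) (-s) h34t (by linarith) (by linarith) (by linarith)
      · rw [Real.sin_neg]; linarith
      · rw [Real.sin_neg, Real.sin_neg]; nlinarith
      · rw [Real.sin_neg, Real.sin_neg, q14_neg, q14_neg]; linarith
  · push_neg at h34
    exact caseB_main s t h34 hs2 ht1 ht2 ha hprod heq

lemma key (s t : ℝ) (hs : s ∈ Set.Ico (-π) π) (ht : t ∈ Set.Ico (-π) π) (hst : s ≠ t)
    (h0 : 2 * Real.cos (2 * s) * q14 t - q14 s * (2 * Real.cos (2 * t)) = 0)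
    (h1 : q14 s * (-Real.sin t) - (-Real.sin s) * q14 t = 0)
    (h2 : (-Real.sin s) * (2 * Real.cos (2 * t)) - 2 * Real.cos (2 * s) * (-Real.sin t) = 0) :
    False := by
  have c2s : Real.cos (2 * s) = 1 - 2 * Real.sin s ^ 2 := by
    rw [Real.cos_two_mul']
    nlinarith [Real.sin_sq_add_cos_sq s]
  have c2t : Real.cos (2 * t) = 1 - 2 * Real.sin t ^ 2 := by
    rw [Real.cos_two_mul']
    nlinarith [Real.sin_sq_add_cos_sq t]
  rw [c2s, c2t] at h0 h2
  have factored : (Real.sin t - Real.sin s) * (1 + 2 * Real.sin s * Real.sin t) = 0 := by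
    nlinarith [h2]
  rcases mul_eq_zero.1 factored with hA | hB
  · -- sin s = sin t
    have hsin : Real.sin t = Real.sin s := by linarith
    have hq : q14 t = q14 s := by
      by_cases hz : Real.sin s = 0
      · -- then cos 2s = 1 and h0 forces q equality
        rw [hsin, hz] at h0 h1
        nlinarith [h0]
      · rw [hsin] at h1
        have : Real.sin s * (q14 t - q14 s) = 0 := by linarith
        rcases mul_eq_zero.1 this with h | h
        · exact absurd h hz
        · linarith
    have habs : |t| = |s| := q14_eq_imp hq
    rcases abs_eq_abs.1 habs with he | he
    · exact hst he.symm
    · -- t = -s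
      subst he
      rw [Real.sin_neg] at hsin
      have hz : Real.sin s = 0 := by linarith
      rcases eq_or_lt_of_le hs.1 with hsl | hsl
      · -- s = -π, t = π : impossible since t < π
        rw [← hsl] at ht
        have := ht.2
        linarith
      · have : s = 0 := (Real.sin_eq_zero_iff_of_lt_of_lt hsl hs.2).1 hz
        apply hst
        rw [this]; norm_num
  · -- sin s * sin t = -1/2
    have hprod : Real.sin s * Real.sin t = -(1/2) := by linarith
    have heq : Real.sin s * q14 t = Real.sin t * q14 s := by linarith
    have hsne : Real.sin s ≠ 0 := by
      intro hz; rw [hz] at hprod; norm_num at hprod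
    rcases hsne.lt_or_gt with hneg | hpos
    · -- sin t > 0, swap roles
      have htpos : 0 < Real.sin t := by nlinarith
      exact caseB t s ht.1 ht.2.le hs.1 hs.2.le htpos (by linarith [hprod]; ) (heq.symm)
    · exact caseB s t hs.1 hs.2.le ht.1 ht.2.le hpos hprod heq

lemma core (s t : ℝ) (hs : s ∈ Set.Ico (-π) π) (ht : t ∈ Set.Ico (-π) π) (hst : s ≠ t) :
    cross3 (uvec s) (uvec t) ≠ 0 := by
  intro h
  have h0 := congrArg (fun v : EuclideanSpace ℝ (Fin 3) => v 0) h
  have h1 := congrArg (fun v : EuclideanSpace ℝ (Fin 3) => v 1) h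
  have h2 := congrArg (fun v : EuclideanSpace ℝ (Fin 3) => v 2) h
  simp only [cross3, uvec, WithLp.equiv_symm_apply, PiLp.toLp_apply, WithLp.ofLp_toLp, Matrix.cons_val_zero,
    Matrix.cons_val_one, Matrix.head_cons, Matrix.cons_val_two, Matrix.tail_cons,
    PiLp.zero_apply] at h0 h1 h2
  exact key s t hs ht hst (by linarith) (by linarith) (by linarith)

/-- The example of Note A.1: the `2π`-periodic `C¹` extension of
`γ̃(t) = (cos t, sin 2t, t/π - (t/π)¹⁵)`, `t ∈ [-π, π]`, is a skew loop on the
cylinder over the centrally symmetric figure-eight `c(t) = (cos t, sin 2t)`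
(the base is invariant under reflection through the origin, since
`c(π - t) = -c(t)`). -/
theorem figure_eight_cylinder_skew_loop
    (γ : ℝ → EuclideanSpace ℝ (Fin 3))
    (hγ_per : Function.Periodic γ (2 * π))
    (hγ_def : ∀ t ∈ Set.Icc (-π) π, γ t = (WithLp.equiv 2 (Fin 3 → ℝ)).symm
      ![Real.cos t, Real.sin (2 * t), t / π - (t / π) ^ 15])
    (hγ_diff : Differentiable ℝ γ) :
    (∀ t : ℝ, Real.cos (π - t) = -Real.cos t ∧
      Real.sin (2 * (π - t)) = -Real.sin (2 * t)) ∧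
    ∀ s t : ℝ, (¬ ∃ m : ℤ, s - t = m * (2 * π)) →
      cross3 (deriv γ s) (deriv γ t) ≠ 0 := by
  constructor
  · intro t
    refine ⟨Real.cos_pi_sub t, ?_⟩
    rw [show 2 * (π - t) = 2 * π - 2 * t by ring, Real.sin_sub, Real.sin_two_pi,
      Real.cos_two_pi]
    ring
  · intro s t hm
    have hp : (0:ℝ) < 2 * π := by positivity
    have hper' : Function.Periodic (deriv γ) (2 * π) := by
      intro x
      have h1 : deriv (fun y => γ (y + 2 * π)) x = deriv γ (x + 2 * π) :=
        deriv_comp_add_const γ (2 * π) x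
      have h2 : (fun y => γ (y + 2 * π)) = γ := funext hγ_per
      rw [h2] at h1
      exact h1.symm
    set s' := toIcoMod hp (-π) s with hs'def
    set t' := toIcoMod hp (-π) t with ht'def
    have hs'mem : s' ∈ Set.Ico (-π) π := by
      have := toIcoMod_mem_Ico hp (-π) s
      rwa [show -π + 2 * π = π by ring] at this
    have ht'mem : t' ∈ Set.Ico (-π) π := by
      have := toIcoMod_mem_Ico hp (-π) t
      rwa [show -π + 2 * π = π by ring] at this
    have hds : deriv γ s = deriv γ s' := by
      rw [hs'def, ← self_sub_toIcoDiv_zsmul hp (-π) s]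
      exact (hper'.sub_zsmul_eq _).symm
    have hdt : deriv γ t = deriv γ t' := by
      rw [ht'def, ← self_sub_toIcoDiv_zsmul hp (-π) t]
      exact (hper'.sub_zsmul_eq _).symm
    have hne : s' ≠ t' := by
      intro he
      apply hm
      refine ⟨toIcoDiv hp (-π) s - toIcoDiv hp (-π) t, ?_⟩
      have h1 : s - toIcoDiv hp (-π) s • (2 * π) = s' := self_sub_toIcoDiv_zsmul hp (-π) s
      have h2 : t - toIcoDiv hp (-π) t • (2 * π) = t' := self_sub_toIcoDiv_zsmul hp (-π) t
      rw [zsmul_eq_mul] at h1 h2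
      push_cast
      rw [he] at h1
      linarith [h1, h2]
    rw [hds, hdt, deriv_gamma γ hγ_def hγ_diff s' hs'mem,
      deriv_gamma γ hγ_def hγ_diff t' ht'mem]
    exact core s' t' hs'mem ht'mem hne
end
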